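/- Let 𝒞 be a finite set of constructive formulas and let G = CK+𝒞 be either T-free or T-full. Then G has the Visser–Harrop property: whenever G proves Γ, {A_i → B_i}_{i∈I} ⇒ C ∨ D, where Γ is a finite multiset of Harrop formulas and I is a finite (possibly empty) index set, then G proves Γ, {A_i → B_i}_{i∈I} ⇒ C, or Γ, {A_i → B_i}_{i∈I} ⇒ D, or Γ, {A_i → B_i}_{i∈I} ⇒ A_i for some i ∈ I. -/

import Mathlib

set_option autoImplicit false

namespace UPT

/-- Modal formulas over atoms of type `α` (the language `ℒ = {∧,∨,→,⊤,⊥,□,◇}`). -/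
inductive Fml (α : Type) : Type where
  | atom : α → Fml α
  | top  : Fml α
  | bot  : Fml α
  | and  : Fml α → Fml α → Fml α
  | or   : Fml α → Fml α → Fml α
  | imp  : Fml α → Fml α → Fml α
  | box  : Fml α → Fml α
  | dia  : Fml α → Fml α
deriving DecidableEq

variable {α β : Type}

/-- Simultaneous substitution of formulas for atoms. -/
def Fml.subst (σ : β → Fml α) : Fml β → Fml α
  | .atom b  => σ b
  | .top     => .top
  | .bot     => .bot
  | .and A B => .and (A.subst σ) (B.subst σ)
  | .or A B  => .or (A.subst σ) (B.subst σ)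
  | .imp A B => .imp (A.subst σ) (B.subst σ)
  | .box A   => .box (A.subst σ)
  | .dia A   => .dia (A.subst σ)

/-- A sequent: a finite multiset antecedent together with a succedent
containing at most one formula. -/
abbrev Seq (α : Type) : Type := Multiset (Fml α) × Option (Fml α)

/-- A rule set relates a (finite) list of premise sequents to a conclusion sequent. -/
abbrev RuleSet (α : Type) : Type := List (Seq α) → Seq α → Prop

/-- The axioms and rules of the single-conclusion sequent calculus `LJ`, stated
schematically: they are closed under substituting arbitrary formulas for atoms
and arbitrary multisets (resp. succedents) for the context variables. -/
inductive LJRule : List (Seq α) → Seq α → Prop where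
  | id (Γ : Multiset (Fml α)) (A : Fml α) : LJRule [] (A ::ₘ Γ, some A)
  | botL (Γ : Multiset (Fml α)) (Δ : Option (Fml α)) : LJRule [] (.bot ::ₘ Γ, Δ)
  | topR (Γ : Multiset (Fml α)) : LJRule [] (Γ, some .top)
  | wL (A : Fml α) (Γ : Multiset (Fml α)) (Δ : Option (Fml α)) :
      LJRule [(Γ, Δ)] (A ::ₘ Γ, Δ)
  | wR (A : Fml α) (Γ : Multiset (Fml α)) : LJRule [(Γ, none)] (Γ, some A)
  | cL (A : Fml α) (Γ : Multiset (Fml α)) (Δ : Option (Fml α)) :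
      LJRule [(A ::ₘ A ::ₘ Γ, Δ)] (A ::ₘ Γ, Δ)
  | cut (A : Fml α) (Γ : Multiset (Fml α)) (Δ : Option (Fml α)) :
      LJRule [(Γ, some A), (A ::ₘ Γ, Δ)] (Γ, Δ)
  | andL₁ (A B : Fml α) (Γ : Multiset (Fml α)) (Δ : Option (Fml α)) :
      LJRule [(A ::ₘ Γ, Δ)] (.and A B ::ₘ Γ, Δ)
  | andL₂ (A B : Fml α) (Γ : Multiset (Fml α)) (Δ : Option (Fml α)) :
      LJRule [(B ::ₘ Γ, Δ)] (.and A B ::ₘ Γ, Δ)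
  | andR (A B : Fml α) (Γ : Multiset (Fml α)) :
      LJRule [(Γ, some A), (Γ, some B)] (Γ, some (.and A B))
  | orL (A B : Fml α) (Γ : Multiset (Fml α)) (Δ : Option (Fml α)) :
      LJRule [(A ::ₘ Γ, Δ), (B ::ₘ Γ, Δ)] (.or A B ::ₘ Γ, Δ)
  | orR₁ (A B : Fml α) (Γ : Multiset (Fml α)) : LJRule [(Γ, some A)] (Γ, some (.or A B))
  | orR₂ (A B : Fml α) (Γ : Multiset (Fml α)) : LJRule [(Γ, some B)] (Γ, some (.or A B))
  | impL (A B : Fml α) (Γ : Multiset (Fml α)) (Δ : Option (Fml α)) :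
      LJRule [(Γ, some A), (B ::ₘ Γ, Δ)] (.imp A B ::ₘ Γ, Δ)
  | impR (A B : Fml α) (Γ : Multiset (Fml α)) :
      LJRule [(A ::ₘ Γ, some B)] (Γ, some (.imp A B))

/-- The rule `K_□`: from `Γ ⇒ A` infer `□Γ ⇒ □A`. -/
inductive KBoxRule : List (Seq α) → Seq α → Prop where
  | mk (Γ : Multiset (Fml α)) (A : Fml α) :
      KBoxRule [(Γ, some A)] (Γ.map Fml.box, some (.box A))

/-- The rule `K_◇`: from `Γ, A ⇒ B` infer `□Γ, ◇A ⇒ ◇B`. -/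
inductive KDiaRule : List (Seq α) → Seq α → Prop where
  | mk (Γ : Multiset (Fml α)) (A B : Fml α) :
      KDiaRule [(A ::ₘ Γ, some B)] (.dia A ::ₘ Γ.map Fml.box, some (.dia B))

/-- The rule `◇L`: from `Γ, A ⇒ B` infer `Γ, ◇A ⇒ ◇B`. -/
inductive DiaLRule : List (Seq α) → Seq α → Prop where
  | mk (Γ : Multiset (Fml α)) (A B : Fml α) :
      DiaLRule [(A ::ₘ Γ, some B)] (.dia A ::ₘ Γ, some (.dia B))

/-- Adding a set `Ax` of axioms to a calculus: the initial sequents `⇒ σ(A)`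
for every substitution instance `σ(A)` of every `A ∈ Ax`. -/
def axRule (Ax : Fml α → Prop) : RuleSet α := fun ps c =>
  ps = [] ∧ ∃ (A : Fml α) (σ : α → Fml α), Ax A ∧ c = ((0 : Multiset (Fml α)), some (A.subst σ))

/-- Using a set of sequents as additional initial sequents (assumptions). -/
def hypRule (H : Set (Seq α)) : RuleSet α := fun ps c => ps = [] ∧ c ∈ H

/-- The sequent calculus `LJ+Ax`. -/
def LJSys (Ax : Fml α → Prop) : RuleSet α := fun ps c => LJRule ps c ∨ axRule Ax ps c

/-- The sequent calculus `CK+Ax = LJ + K_□ + K_◇ + Ax`. -/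
def CKSys (Ax : Fml α → Prop) : RuleSet α := fun ps c =>
  LJRule ps c ∨ KBoxRule ps c ∨ KDiaRule ps c ∨ axRule Ax ps c

/-- The sequent calculus `CK_□+Ax = LJ + K_□ + Ax`. -/
def CKBoxSys (Ax : Fml α → Prop) : RuleSet α := fun ps c =>
  LJRule ps c ∨ KBoxRule ps c ∨ axRule Ax ps c

/-- The sequent calculus `BLL+Ax = LJ + ◇L + Ax`. -/
def BLLSys (Ax : Fml α → Prop) : RuleSet α := fun ps c =>
  LJRule ps c ∨ DiaLRule ps c ∨ axRule Ax ps c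

/-- Provability of a sequent in the calculus generated by a rule set. -/
inductive Derives (R : RuleSet α) : Multiset (Fml α) → Option (Fml α) → Prop where
  | step {ps : List (Seq α)} {c : Seq α} (hr : R ps c)
      (hp : ∀ p ∈ ps, Derives R p.1 p.2) : Derives R c.1 c.2

/-- Basic formulas: generated from atoms, `⊤`, `⊥` by `∧`, `∨`, `◇`. -/
inductive Basic : Fml α → Prop where
  | atom (a : α) : Basic (.atom a)
  | top : Basic (.top : Fml α)
  | bot : Basic (.bot : Fml α)
  | and {A B : Fml α} : Basic A → Basic B → Basic (.and A B)
  | or {A B : Fml α} : Basic A → Basic B → Basic (.or A B)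
  | dia {A : Fml α} : Basic A → Basic (.dia A)

/-- Almost positive formulas: generated from basic formulas by `∧`, `∨`, `□`, `◇`
and implications `A → B` with `A` basic and `B` almost positive. -/
inductive AlmostPos : Fml α → Prop where
  | basic {A : Fml α} : Basic A → AlmostPos A
  | and {A B : Fml α} : AlmostPos A → AlmostPos B → AlmostPos (.and A B)
  | or {A B : Fml α} : AlmostPos A → AlmostPos B → AlmostPos (.or A B)
  | box {A : Fml α} : AlmostPos A → AlmostPos (.box A)
  | dia {A : Fml α} : AlmostPos A → AlmostPos (.dia A)
  | imp {A B : Fml α} : Basic A → AlmostPos B → AlmostPos (.imp A B)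

/-- Constructive formulas: generated from basic formulas by `∧`, `□` and
implications `A → B` with `A` almost positive and `B` constructive. -/
inductive Constructive : Fml α → Prop where
  | basic {A : Fml α} : Basic A → Constructive A
  | and {A B : Fml α} : Constructive A → Constructive B → Constructive (.and A B)
  | box {A : Fml α} : Constructive A → Constructive (.box A)
  | imp {A B : Fml α} : AlmostPos A → Constructive B → Constructive (.imp A B)

/-- Harrop formulas: atoms, `⊥`, `⊤`, closed under `∧`, `□`, and implications
`A → B` with `A` arbitrary and `B` Harrop. -/
inductive Harrop : Fml α → Prop where
  | atom (a : α) : Harrop (.atom a)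
  | top : Harrop (.top : Fml α)
  | bot : Harrop (.bot : Fml α)
  | and {A B : Fml α} : Harrop A → Harrop B → Harrop (.and A B)
  | box {A : Fml α} : Harrop A → Harrop (.box A)
  | imp (A : Fml α) {B : Fml α} : Harrop B → Harrop (.imp A B)

/-- Conjunction of a list of formulas (`⋀∅ = ⊤`). -/
def conj : List (Fml α) → Fml α
  | [] => .top
  | [A] => A
  | A :: B :: l => .and A (conj (B :: l))

/-- Disjunction of a list of formulas (`⋁∅ = ⊥`). -/
def disj : List (Fml α) → Fml α
  | [] => .bot
  | [A] => A
  | A :: B :: l => .or A (disj (B :: l))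

/-- Disjunction of a succedent (at most one formula; `⋁∅ = ⊥`). -/
def odisj : Option (Fml α) → Fml α
  | none => .bot
  | some A => A

/-- The multiset `{A_i → B_i}_{i ∈ I}` of implications of an indexed family. -/
def imps (AB : List (Fml α × Fml α)) : Multiset (Fml α) :=
  ↑(AB.map fun p => Fml.imp p.1 p.2)

/-- The conjunction `⋀_{i∈I} (A_i → B_i)` of an indexed family of implications. -/
def impConj (AB : List (Fml α × Fml α)) : Fml α :=
  conj (AB.map fun p => Fml.imp p.1 p.2)

/-- Truth in the one-node *irreflexive* frame `𝒦ᵢ` under a Boolean valuation: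
`□A` is always true and `◇A` is always false; the propositional connectives
are evaluated classically. -/
def evalI (v : α → Bool) : Fml α → Bool
  | .atom a  => v a
  | .top     => true
  | .bot     => false
  | .and A B => evalI v A && evalI v B
  | .or A B  => evalI v A || evalI v B
  | .imp A B => !evalI v A || evalI v B
  | .box _   => true
  | .dia _   => false

/-- Truth in the one-node *reflexive* frame `𝒦ᵣ` under a Boolean valuation:
`□A` and `◇A` take the value of `A`. -/
def evalR (v : α → Bool) : Fml α → Bool
  | .atom a  => v a
  | .top     => true
  | .bot     => false
  | .and A B => evalR v A && evalR v B
  | .or A B  => evalR v A || evalR v B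
  | .imp A B => !evalR v A || evalR v B
  | .box A   => evalR v A
  | .dia A   => evalR v A

/-- Validity of a sequent with respect to a one-node semantics: under every
valuation, if all formulas of the antecedent are true then so is the succedent. -/
def SeqValid (ev : (α → Bool) → Fml α → Bool) (Γ : Multiset (Fml α)) (Δ : Option (Fml α)) :
    Prop :=
  ∀ v : α → Bool, (∀ A ∈ Γ, ev v A = true) → ∃ B ∈ Δ, ev v B = true

/-- `CK+Ax` is T-free: every provable sequent is valid in the irreflexive node frame. -/
def TFree (Ax : Fml α → Prop) : Prop :=
  ∀ (Γ : Multiset (Fml α)) (Δ : Option (Fml α)), Derives (CKSys Ax) Γ Δ → SeqValid evalI Γ Δ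

/-- `CK+Ax` is T-full: every provable sequent is valid in the reflexive node
frame and the calculus proves `⇒ □p → p` and `⇒ p → ◇p`. -/
def TFull (Ax : Fml α → Prop) : Prop :=
  (∀ (Γ : Multiset (Fml α)) (Δ : Option (Fml α)), Derives (CKSys Ax) Γ Δ → SeqValid evalR Γ Δ) ∧
  (∀ a : α, Derives (CKSys Ax) 0 (some (.imp (.box (.atom a)) (.atom a)))) ∧
  (∀ a : α, Derives (CKSys Ax) 0 (some (.imp (.atom a) (.dia (.atom a)))))

/-- Classical validity of a (modality-free) sequent: `⋀Γ → ⋁Δ` is true under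
every Boolean valuation of the atoms. -/
def ClValid (Γ : Multiset (Fml α)) (Δ : Option (Fml α)) : Prop :=
  ∀ v : α → Bool, (∀ A ∈ Γ, evalI v A = true) → ∃ B ∈ Δ, evalI v B = true

/-- Nonempty conjunctions of atoms. -/
inductive AtomConj : Fml α → Prop where
  | single (a : α) : AtomConj (.atom a)
  | and {A B : Fml α} : AtomConj A → AtomConj B → AtomConj (.and A B)

/-- Implicational Horn formulas: `⊥`, atoms, and implications `⋀Q → r` with `Q`
a nonempty multiset of atoms and `r` an atom or `⊥`. -/
inductive ImpHorn : Fml α → Prop where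
  | bot : ImpHorn (.bot : Fml α)
  | atom (a : α) : ImpHorn (.atom a)
  | impAtom {A : Fml α} (hA : AtomConj A) (a : α) : ImpHorn (.imp A (.atom a))
  | impBot {A : Fml α} (hA : AtomConj A) : ImpHorn (.imp A .bot)

/-- Formulas of the form `◇^n p` with `p` an atom and `n ≥ 0`. -/
inductive DiaPowAtom : Fml α → Prop where
  | atom (a : α) : DiaPowAtom (.atom a)
  | dia {A : Fml α} : DiaPowAtom A → DiaPowAtom (.dia A)

/-- Nonempty conjunctions `⋀_{i=1}^k ◇^{n_i} p_i` of formulas `◇^{n_i} p_i`. -/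
inductive DiaConj : Fml α → Prop where
  | single {A : Fml α} : DiaPowAtom A → DiaConj A
  | and {A B : Fml α} : DiaConj A → DiaConj B → DiaConj (.and A B)

/-- Modal Horn formulas: `⊥` and atoms, closed under `□` and under implications
`A → B` with `A = ⋀_{i=1}^k ◇^{n_i} p_i` and `B` modal Horn. -/
inductive ModalHorn : Fml α → Prop where
  | bot : ModalHorn (.bot : Fml α)
  | atom (a : α) : ModalHorn (.atom a)
  | box {A : Fml α} : ModalHorn A → ModalHorn (.box A)
  | imp {A B : Fml α} : DiaConj A → ModalHorn B → ModalHorn (.imp A B)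

/-- The predicate "all atoms of the formula satisfy `P`". -/
def Fml.AtomsIn (P : α → Prop) : Fml α → Prop
  | .atom a  => P a
  | .top     => True
  | .bot     => True
  | .and A B => A.AtomsIn P ∧ B.AtomsIn P
  | .or A B  => A.AtomsIn P ∧ B.AtomsIn P
  | .imp A B => A.AtomsIn P ∧ B.AtomsIn P
  | .box A   => A.AtomsIn P
  | .dia A   => A.AtomsIn P

/-- No `◇` occurs in the formula. -/
def Fml.DiaFree : Fml α → Prop
  | .atom _  => True
  | .top     => True
  | .bot     => True
  | .and A B => A.DiaFree ∧ B.DiaFree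
  | .or A B  => A.DiaFree ∧ B.DiaFree
  | .imp A B => A.DiaFree ∧ B.DiaFree
  | .box A   => A.DiaFree
  | .dia _   => False

/-- No `□` occurs in the formula. -/
def Fml.BoxFree : Fml α → Prop
  | .atom _  => True
  | .top     => True
  | .bot     => True
  | .and A B => A.BoxFree ∧ B.BoxFree
  | .or A B  => A.BoxFree ∧ B.BoxFree
  | .imp A B => A.BoxFree ∧ B.BoxFree
  | .box _   => False
  | .dia A   => A.BoxFree

/-- The formula is modality-free (propositional). -/
def Fml.ModFree : Fml α → Prop
  | .atom _  => True
  | .top     => True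
  | .bot     => True
  | .and A B => A.ModFree ∧ B.ModFree
  | .or A B  => A.ModFree ∧ B.ModFree
  | .imp A B => A.ModFree ∧ B.ModFree
  | .box _   => False
  | .dia _   => False

/-- An angling of the language: an injection `φ ↦ ⟨φ⟩` from formulas into the
atoms whose image (the angled atoms) is disjoint from a fixed infinite set of
plain atoms. -/
structure Angling (α : Type) where
  angle : Fml α → α
  plain : Set α
  inj : Function.Injective angle
  plain_infinite : plain.Infinite
  disjoint : ∀ φ : Fml α, angle φ ∉ plain

/-- `a` is an angled atom. -/
def Angling.Angled (S : Angling α) (a : α) : Prop := ∃ φ : Fml α, S.angle φ = a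

/-- The translation `t`: `⊥^t = ⊥`, `p^t = ⟨p⟩`, `⊤^t = ⟨⊤⟩`,
`(A ∘ B)^t = (A^t ∘ B^t) ∧ ⟨A ∘ B⟩` and `(○A)^t = (○A^t) ∧ ⟨○A⟩`. -/
def Angling.tr (S : Angling α) : Fml α → Fml α
  | .atom a  => .atom (S.angle (.atom a))
  | .top     => .atom (S.angle .top)
  | .bot     => .bot
  | .and A B => .and (.and (S.tr A) (S.tr B)) (.atom (S.angle (.and A B)))
  | .or A B  => .and (.or (S.tr A) (S.tr B)) (.atom (S.angle (.or A B)))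
  | .imp A B => .and (.imp (S.tr A) (S.tr B)) (.atom (S.angle (.imp A B)))
  | .box A   => .and (.box (S.tr A)) (.atom (S.angle (.box A)))
  | .dia A   => .and (.dia (S.tr A)) (.atom (S.angle (.dia A)))

/-- Action of the standard substitution on atoms: an angled atom `⟨φ⟩` is sent
to `φ`; plain atoms are fixed. -/
noncomputable def Angling.stdAtom (S : Angling α) (a : α) : Fml α :=
  haveI := Classical.propDecidable (∃ φ : Fml α, S.angle φ = a)
  if h : ∃ φ : Fml α, S.angle φ = a then h.choose else .atom a

/-- The standard substitution `s`: replaces each angled atom `⟨φ⟩` by `φ`,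
fixes the plain atoms, and commutes with all connectives. -/
noncomputable def Angling.std (S : Angling α) : Fml α → Fml α :=
  Fml.subst S.stdAtom

/-- The Visser–Harrop property of a calculus. -/
def VisserHarrop (R : RuleSet α) : Prop :=
  ∀ (Γ : Multiset (Fml α)), (∀ A ∈ Γ, Harrop A) →
  ∀ (AB : List (Fml α × Fml α)) (C D : Fml α),
    Derives R (Γ + imps AB) (some (.or C D)) →
    Derives R (Γ + imps AB) (some C) ∨
    Derives R (Γ + imps AB) (some D) ∨
    ∃ p ∈ AB, Derives R (Γ + imps AB) (some p.1)

/-- The disjunction property of a calculus. -/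
def DisjProp (R : RuleSet α) : Prop :=
  ∀ C D : Fml α, Derives R 0 (some (.or C D)) →
    Derives R 0 (some C) ∨ Derives R 0 (some D)

/-- The formula interpretation `I(Γ ⇒ Δ) = ⋀Γ → ⋁Δ` belongs to `L` (stated for
every enumeration of the antecedent multiset as a list). -/
def interpIn (L : Set (Fml α)) (s : Seq α) : Prop :=
  ∀ l : List (Fml α), (↑l : Multiset (Fml α)) = s.1 → Fml.imp (conj l) (odisj s.2) ∈ L

/- Named modal axioms (with `p := atom 0`, `q := atom 1`). -/
def axTa : Fml ℕ := .imp (.box (.atom 0)) (.atom 0)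
def axTb : Fml ℕ := .imp (.atom 0) (.dia (.atom 0))
def axBa : Fml ℕ := .imp (.dia (.box (.atom 0))) (.atom 0)
def axBb : Fml ℕ := .imp (.atom 0) (.box (.dia (.atom 0)))
def ax4a : Fml ℕ := .imp (.box (.atom 0)) (.box (.box (.atom 0)))
def ax4b : Fml ℕ := .imp (.dia (.dia (.atom 0))) (.dia (.atom 0))
def ax5a : Fml ℕ := .imp (.dia (.box (.atom 0))) (.box (.atom 0))
def ax5b : Fml ℕ := .imp (.dia (.atom 0)) (.box (.dia (.atom 0)))
def axDiaBot : Fml ℕ := .imp (.dia .bot) .bot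
def axDiaOr : Fml ℕ :=
  .imp (.dia (.or (.atom 0) (.atom 1))) (.or (.dia (.atom 0)) (.dia (.atom 1)))
def axBoxImp : Fml ℕ :=
  .imp (.imp (.dia (.atom 0)) (.box (.atom 1))) (.box (.imp (.atom 0) (.atom 1)))

/-- The axioms of `X ⊆ {T, B, 4, 5}` in both their `a`- and `b`-versions. -/
def XAxioms (tT tB t4 t5 : Bool) : Set (Fml ℕ) :=
  (if tT then ({axTa, axTb} : Set (Fml ℕ)) else ∅) ∪
  (if tB then ({axBa, axBb} : Set (Fml ℕ)) else ∅) ∪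
  (if t4 then ({ax4a, ax4b} : Set (Fml ℕ)) else ∅) ∪
  (if t5 then ({ax5a, ax5b} : Set (Fml ℕ)) else ∅)

/-- The additional axioms of `IK` over `CK`. -/
def IKExtra : Set (Fml ℕ) := {axDiaBot, axDiaOr, axBoxImp}

/-- The right rule with premises `{Γ, φ̄_i ⇒ ψ̄_i}_{i∈I}` and conclusion
`Γ, θ̄ ⇒ η̄`, closed under all substitutions of formulas for atoms and
multisets for the context `Γ`. -/
def rightRuleInst (prems : List (List (Fml α) × Option (Fml α)))
    (θ : List (Fml α)) (η : Option (Fml α)) : RuleSet α := fun ps c =>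
  ∃ (σ : α → Fml α) (Γ : Multiset (Fml α)),
    ps = prems.map (fun pr =>
        ((Γ + ↑(pr.1.map (Fml.subst σ)) : Multiset (Fml α)), pr.2.map (Fml.subst σ))) ∧
    c = ((Γ + ↑(θ.map (Fml.subst σ)) : Multiset (Fml α)), η.map (Fml.subst σ))

/-- The left rule with premises `{Γ, φ̄_i ⇒ ψ̄_i}_{i∈I} ∪ {Γ, θ̄_j ⇒ Δ}_{j∈J}`
and conclusion `Γ, η̄ ⇒ Δ`, closed under all substitutions of formulas for
atoms and multisets for `Γ` and `Δ`. -/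
def leftRuleInst (prems : List (List (Fml α) × Option (Fml α)))
    (lefts : List (List (Fml α))) (η : List (Fml α)) : RuleSet α := fun ps c =>
  ∃ (σ : α → Fml α) (Γ : Multiset (Fml α)) (Δ : Option (Fml α)),
    ps = prems.map (fun pr =>
          ((Γ + ↑(pr.1.map (Fml.subst σ)) : Multiset (Fml α)), pr.2.map (Fml.subst σ)))
        ++ lefts.map (fun θj => ((Γ + ↑(θj.map (Fml.subst σ)) : Multiset (Fml α)), Δ)) ∧
    c = ((Γ + ↑(η.map (Fml.subst σ)) : Multiset (Fml α)), Δ)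

/-- The formula `Ax_R` of a right rule. -/
def AxRight (prems : List (List (Fml α) × Option (Fml α)))
    (θ : List (Fml α)) (η : Option (Fml α)) : Fml α :=
  .imp (.and (conj (prems.map fun pr => .imp (conj pr.1) (odisj pr.2))) (conj θ)) (odisj η)

/-- The formula `Ax_R` of a left rule. -/
def AxLeft (prems : List (List (Fml α) × Option (Fml α)))
    (lefts : List (List (Fml α))) (η : List (Fml α)) : Fml α :=
  .imp (.and (conj (prems.map fun pr => .imp (conj pr.1) (odisj pr.2))) (conj η))
    (disj (lefts.map conj))

/-- The forgetful translation `f_i`: fixes atoms, `⊤`, `⊥`, commutes with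
`∧`, `∨`, `→`, `□`, and sends every `◇A` to `⊥`. -/
def fi : Fml α → Fml α
  | .atom a  => .atom a
  | .top     => .top
  | .bot     => .bot
  | .and A B => .and (fi A) (fi B)
  | .or A B  => .or (fi A) (fi B)
  | .imp A B => .imp (fi A) (fi B)
  | .box A   => .box (fi A)
  | .dia _   => .bot

/-- The forgetful translation `f_r`: fixes atoms, `⊤`, `⊥`, commutes with
`∧`, `∨`, `→`, `□`, and sends `◇A` to `f_r A`. -/
def fr : Fml α → Fml α
  | .atom a  => .atom a
  | .top     => .top
  | .bot     => .bot
  | .and A B => .and (fr A) (fr B)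
  | .or A B  => .or (fr A) (fr B)
  | .imp A B => .imp (fr A) (fr B)
  | .box A   => .box (fr A)
  | .dia A   => fr A


/-!
Aczel's slash, relativised to the antecedent `Θ = Γ, {Aᵢ → Bᵢ}` and merged with the one-node
frame of `G`: a formula is slashed if it is provable from `Θ` and its outermost connective is
witnessed (a disjunct for `∨`, slash-preservation for `→`), where `□` and `◇` are read as in the
frame (`◇` never holds in `𝒦ᵢ`). Every derivable sequent preserves the slash. The one case that
needs the hypotheses on `G` is an axiom instance `σ(A)`: instantiating `A` by `⊤`/`⊥` according
to which `σ(p)` are slashed and using validity in the frame shows that `A` is true under that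
valuation, and for constructive `A` this truth transfers to the slash of `σ(A)`. Finally, unless
`Θ` proves `⊥` or some `Aᵢ`, all of `Θ` is slashed (Harrop formulas because they are provable,
`Aᵢ → Bᵢ` vacuously), so the slashed `C ∨ D` yields `C` or `D`.
-/

section Derivations

variable {Ax : Fml α → Prop} {Γ Θ : Multiset (Fml α)} {E : Option (Fml α)} {A B F : Fml α}

namespace Derives

lemma ofLJ {ps : List (Seq α)} (hr : LJRule ps (Γ, E))
    (hp : ∀ p ∈ ps, Derives (CKSys Ax) p.1 p.2) : Derives (CKSys Ax) Γ E :=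
  .step (c := (Γ, E)) (Or.inl hr) hp

lemma axiom_subst (hA : Ax A) (σ : α → Fml α) : Derives (CKSys Ax) 0 (some (A.subst σ)) :=
  .step (c := (0, _)) (Or.inr <| Or.inr <| Or.inr ⟨rfl, A, σ, hA, rfl⟩) (by simp)

lemma of_mem (h : F ∈ Θ) : Derives (CKSys Ax) Θ (some F) := by
  obtain ⟨Θ', rfl⟩ := Multiset.exists_cons_of_mem h
  exact ofLJ (LJRule.id Θ' F) (by simp)

lemma top : Derives (CKSys Ax) Θ (some .top) :=
  ofLJ (LJRule.topR Θ) (by simp)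

lemma weaken (h : Derives (CKSys Ax) Γ E) (hle : Γ ≤ Θ) : Derives (CKSys Ax) Θ E := by
  obtain ⟨S, rfl⟩ := Multiset.le_iff_exists_add.1 hle
  clear hle
  induction S using Multiset.induction with
  | empty => simpa using h
  | cons A S ih =>
    rw [Multiset.add_cons]
    exact ofLJ (LJRule.wL A _ E) (by simpa using ih)

lemma cut (h₁ : Derives (CKSys Ax) Θ (some A)) (h₂ : Derives (CKSys Ax) (A ::ₘ Θ) E) :
    Derives (CKSys Ax) Θ E :=
  ofLJ (LJRule.cut A Θ E) (by simp [h₁, h₂])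

lemma cut_of_forall_mem (h : Derives (CKSys Ax) Γ E)
    (hΓ : ∀ F ∈ Γ, Derives (CKSys Ax) Θ (some F)) : Derives (CKSys Ax) Θ E := by
  replace h : Derives (CKSys Ax) (Γ + Θ) E := h.weaken (Multiset.le_add_right _ _)
  induction Γ using Multiset.induction with
  | empty => simpa using h
  | cons A Γ ih =>
    rw [Multiset.forall_mem_cons] at hΓ
    rw [Multiset.cons_add] at h
    exact ih hΓ.2 ((hΓ.1.weaken (Multiset.le_add_left _ _)).cut h)

lemma mp (h₁ : Derives (CKSys Ax) Θ (some (.imp A B))) (h₂ : Derives (CKSys Ax) Θ (some A)) :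
    Derives (CKSys Ax) Θ (some B) :=
  h₁.cut <| ofLJ (LJRule.impL A B Θ _) (by simp [h₂, of_mem])

lemma and_left (h : Derives (CKSys Ax) Θ (some (.and A B))) : Derives (CKSys Ax) Θ (some A) :=
  h.cut <| ofLJ (LJRule.andL₁ A B Θ _) (by simp [of_mem])

lemma and_right (h : Derives (CKSys Ax) Θ (some (.and A B))) : Derives (CKSys Ax) Θ (some B) :=
  h.cut <| ofLJ (LJRule.andL₂ A B Θ _) (by simp [of_mem])

lemma andI (h₁ : Derives (CKSys Ax) Θ (some A)) (h₂ : Derives (CKSys Ax) Θ (some B)) :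
    Derives (CKSys Ax) Θ (some (.and A B)) :=
  ofLJ (LJRule.andR A B Θ) (by simp [h₁, h₂])

lemma or_inl (h : Derives (CKSys Ax) Θ (some A)) : Derives (CKSys Ax) Θ (some (.or A B)) :=
  ofLJ (LJRule.orR₁ A B Θ) (by simp [h])

lemma or_inr (h : Derives (CKSys Ax) Θ (some B)) : Derives (CKSys Ax) Θ (some (.or A B)) :=
  ofLJ (LJRule.orR₂ A B Θ) (by simp [h])

lemma of_bot (h : Derives (CKSys Ax) Θ (some .bot)) : Derives (CKSys Ax) Θ E :=
  h.cut <| ofLJ (LJRule.botL Θ E) (by simp)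

end Derives
end Derivations

section Substitution

variable {γ : Type} {Ax : Fml α → Prop}

lemma Fml.subst_subst (σ : γ → Fml β) (τ : β → Fml α) (F : Fml γ) :
    (F.subst σ).subst τ = F.subst (fun b => (σ b).subst τ) := by
  induction F <;> simp [Fml.subst, *]

def Seq.subst (τ : α → Fml α) (s : Seq α) : Seq α :=
  (s.1.map (Fml.subst τ), s.2.map (Fml.subst τ))

lemma LJRule.subst {ps : List (Seq α)} {c : Seq α} (τ : α → Fml α) (h : LJRule ps c) :
    LJRule (ps.map (Seq.subst τ)) (c.subst τ) := by
  cases h <;> simp only [Seq.subst, List.map_cons, List.map_nil, Multiset.map_cons,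
    Option.map_some, Option.map_none, Fml.subst] <;> constructor

lemma CKSys.subst {ps : List (Seq α)} {c : Seq α} (τ : α → Fml α) (h : CKSys Ax ps c) :
    CKSys Ax (ps.map (Seq.subst τ)) (c.subst τ) := by
  have map_box (Γ : Multiset (Fml α)) :
      (Γ.map .box).map (Fml.subst τ) = (Γ.map (Fml.subst τ)).map .box := by
    simp [Multiset.map_map, Function.comp_def, Fml.subst]
  rcases h with h | ⟨Γ, A⟩ | ⟨Γ, A, B⟩ | ⟨rfl, A, σ, hA, rfl⟩
  · exact Or.inl (h.subst τ)
  · refine Or.inr <| Or.inl ?_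
    simp only [Seq.subst, List.map_cons, List.map_nil, Option.map_some, Fml.subst, map_box]
    constructor
  · refine Or.inr <| Or.inr <| Or.inl ?_
    simp only [Seq.subst, List.map_cons, List.map_nil, Multiset.map_cons, Option.map_some,
      Fml.subst, map_box]
    constructor
  · refine Or.inr <| Or.inr <| Or.inr ⟨rfl, A, fun b => (σ b).subst τ, hA, ?_⟩
    simp [Seq.subst, Fml.subst_subst]

lemma Derives.subst {Γ : Multiset (Fml α)} {E : Option (Fml α)} (τ : α → Fml α)
    (h : Derives (CKSys Ax) Γ E) :
    Derives (CKSys Ax) (Γ.map (Fml.subst τ)) (E.map (Fml.subst τ)) := by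
  induction h with
  | step hr _ ih => exact .step (c := Seq.subst τ _) (hr.subst τ) (List.forall_mem_map.2 ih)

end Substitution

section Slash

def evalNode (refl : Bool) (v : α → Bool) : Fml α → Bool
  | .atom a  => v a
  | .top     => true
  | .bot     => false
  | .and A B => evalNode refl v A && evalNode refl v B
  | .or A B  => evalNode refl v A || evalNode refl v B
  | .imp A B => !evalNode refl v A || evalNode refl v B
  | .box A   => !refl || evalNode refl v A
  | .dia A   => refl && evalNode refl v A

lemma evalNode_false : evalNode false = (evalI : (α → Bool) → Fml α → Bool) := by
  funext v F
  induction F <;> simp [evalNode, evalI, *]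

lemma evalNode_true : evalNode true = (evalR : (α → Bool) → Fml α → Bool) := by
  funext v F
  induction F <;> simp [evalNode, evalR, *]

lemma evalNode_subst (refl : Bool) (v : α → Bool) (τ : α → Fml α) (F : Fml α) :
    evalNode refl v (F.subst τ) = evalNode refl (fun a => evalNode refl v (τ a)) F := by
  induction F <;> simp [Fml.subst, evalNode, *]

variable {Ax : Fml α → Prop}

def ProvesTBox (Ax : Fml α → Prop) : Prop :=
  ∀ F, Derives (CKSys Ax) 0 (some (.imp (.box F) F))

def ProvesTDia (Ax : Fml α → Prop) : Prop :=
  ∀ F, Derives (CKSys Ax) 0 (some (.imp F (.dia F)))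

lemma ProvesTBox.derives_of_box {Θ : Multiset (Fml α)} {F : Fml α} (h : ProvesTBox Ax)
    (hd : Derives (CKSys Ax) Θ (some (.box F))) : Derives (CKSys Ax) Θ (some F) :=
  ((h F).weaken (Multiset.zero_le Θ)).mp hd

lemma ProvesTDia.derives_dia {Θ : Multiset (Fml α)} {F : Fml α} (h : ProvesTDia Ax)
    (hd : Derives (CKSys Ax) Θ (some F)) : Derives (CKSys Ax) Θ (some (.dia F)) :=
  ((h F).weaken (Multiset.zero_le Θ)).mp hd

lemma TFull.provesTBox [Inhabited α] (h : TFull Ax) : ProvesTBox Ax := fun F => by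
  simpa [Fml.subst] using (h.2.1 default).subst fun _ => F

lemma TFull.provesTDia [Inhabited α] (h : TFull Ax) : ProvesTDia Ax := fun F => by
  simpa [Fml.subst] using (h.2.2 default).subst fun _ => F

def Slash (Ax : Fml α → Prop) (Θ : Multiset (Fml α)) (refl : Bool) : Fml α → Prop
  | .atom a  => Derives (CKSys Ax) Θ (some (.atom a))
  | .top     => True
  | .bot     => False
  | .and A B => Slash Ax Θ refl A ∧ Slash Ax Θ refl B
  | .or A B  => Slash Ax Θ refl A ∨ Slash Ax Θ refl B
  | .imp A B => Derives (CKSys Ax) Θ (some (.imp A B)) ∧ (Slash Ax Θ refl A → Slash Ax Θ refl B)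
  | .box A   => Derives (CKSys Ax) Θ (some (.box A)) ∧ (refl = true → Slash Ax Θ refl A)
  | .dia A   => refl = true ∧ Derives (CKSys Ax) Θ (some (.dia A)) ∧ Slash Ax Θ refl A

def SeqSlash (Ax : Fml α → Prop) (Θ : Multiset (Fml α)) (refl : Bool)
    (Γ : Multiset (Fml α)) (E : Option (Fml α)) : Prop :=
  (∀ F ∈ Γ, Slash Ax Θ refl F) → E.elim False (Slash Ax Θ refl)

open Classical in
noncomputable def slashVal (Ax : Fml α → Prop) (Θ : Multiset (Fml α)) (refl : Bool)
    (σ : α → Fml α) (a : α) : Bool :=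
  decide (Slash Ax Θ refl (σ a))

variable {Θ : Multiset (Fml α)} {refl : Bool}

lemma Slash.derives {F : Fml α} (h : Slash Ax Θ refl F) : Derives (CKSys Ax) Θ (some F) := by
  induction F with
  | atom => exact h
  | imp | box => exact h.1
  | dia => exact h.2.1
  | top => exact .top
  | bot => exact h.elim
  | and A B ihA ihB => exact .andI (ihA h.1) (ihB h.2)
  | or A B ihA ihB => exact h.elim (fun h => .or_inl (ihA h)) (fun h => .or_inr (ihB h))

lemma LJRule.seqSlash {ps : List (Seq α)} {c : Seq α} (hr : LJRule ps c)
    (hd : Derives (CKSys Ax) c.1 c.2) (ih : ∀ p ∈ ps, SeqSlash Ax Θ refl p.1 p.2) :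
    SeqSlash Ax Θ refl c.1 c.2 := by
  cases hr with
  | impR A B Γ =>
    refine fun hΓ => ⟨hd.cut_of_forall_mem fun F hF => (hΓ F hF).derives, fun hA => ?_⟩
    exact ih _ (List.mem_singleton_self _) (Multiset.forall_mem_cons.2 ⟨hA, hΓ⟩)
  | _ => simp_all [SeqSlash, Slash] <;> tauto

lemma Basic.slash_subst_iff (hdiaT : refl = true → ProvesTDia Ax)
    (σ : α → Fml α) {B : Fml α} (hB : Basic B) :
    Slash Ax Θ refl (B.subst σ) ↔ evalNode refl (slashVal Ax Θ refl σ) B = true := by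
  induction hB with
  | atom => simp [Fml.subst, evalNode, slashVal]
  | top | bot => simp [Fml.subst, evalNode, Slash]
  | and _ _ ihA ihB | or _ _ ihA ihB => simp [Fml.subst, evalNode, Slash, ihA, ihB]
  | @dia A _ ih =>
    simp only [Fml.subst, Slash, evalNode, Bool.and_eq_true, ← ih]
    refine ⟨fun h => ⟨h.1, h.2.2⟩, fun ⟨hrefl, hA⟩ => ⟨hrefl, ?_, hA⟩⟩
    exact (hdiaT hrefl).derives_dia hA.derives

lemma AlmostPos.eval_of_slash_subst
    (hdiaT : refl = true → ProvesTDia Ax)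
    (σ : α → Fml α) {A : Fml α} (hA : AlmostPos A) (h : Slash Ax Θ refl (A.subst σ)) :
    evalNode refl (slashVal Ax Θ refl σ) A = true := by
  induction hA with
  | basic hB => exact (hB.slash_subst_iff hdiaT σ).1 h
  | and _ _ ihA ihB => simpa [evalNode] using ⟨ihA h.1, ihB h.2⟩
  | or _ _ ihA ihB => simpa [evalNode] using h.imp ihA ihB
  | box _ ih =>
    cases refl
    · rfl
    · exact ih (h.2 rfl)
  | dia _ ih =>
    obtain ⟨rfl, -, hA⟩ := h
    exact ih hA
  | imp hB _ ih =>
    simpa [evalNode, imp_iff_not_or] using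
      fun hev => ih (h.2 ((hB.slash_subst_iff hdiaT σ).2 hev))

lemma Constructive.slash_subst_of_eval
    (hboxT : refl = true → ProvesTBox Ax) (hdiaT : refl = true → ProvesTDia Ax)
    (σ : α → Fml α) {C : Fml α} (hC : Constructive C)
    (hev : evalNode refl (slashVal Ax Θ refl σ) C = true)
    (hd : Derives (CKSys Ax) Θ (some (C.subst σ))) : Slash Ax Θ refl (C.subst σ) := by
  induction hC with
  | basic hB => exact (hB.slash_subst_iff hdiaT σ).2 hev
  | and _ _ ihA ihB =>
    simp only [evalNode, Bool.and_eq_true] at hev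
    exact ⟨ihA hev.1 hd.and_left, ihB hev.2 hd.and_right⟩
  | box _ ih =>
    refine ⟨hd, fun hrefl => ?_⟩
    subst hrefl
    exact ih hev ((hboxT rfl).derives_of_box hd)
  | imp hA _ ih =>
    refine ⟨hd, fun hsl => ?_⟩
    simp only [evalNode, hA.eval_of_slash_subst hdiaT σ hsl, Bool.not_true, Bool.false_or] at hev
    exact ih hev (hd.mp hsl.derives)

lemma slash_axiom_subst
    (hsound : ∀ Γ E, Derives (CKSys Ax) Γ E → SeqValid (evalNode refl) Γ E)
    (hboxT : refl = true → ProvesTBox Ax) (hdiaT : refl = true → ProvesTDia Ax)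
    {A : Fml α} (hAx : Ax A) (hA : Constructive A) (σ : α → Fml α) :
    Slash Ax Θ refl (A.subst σ) := by
  let τ : α → Fml α := fun a => cond (slashVal Ax Θ refl σ a) .top .bot
  obtain ⟨_, hmem, hev⟩ := hsound _ _ (Derives.axiom_subst hAx τ) (fun _ => true) (by simp)
  obtain rfl := Option.some_injective _ hmem
  have hτ : (fun a => evalNode refl (fun _ => true) (τ a)) = slashVal Ax Θ refl σ := by
    funext a
    simp only [τ]
    cases slashVal Ax Θ refl σ a <;> rfl
  rw [evalNode_subst, hτ] at hev
  exact hA.slash_subst_of_eval hboxT hdiaT σ hev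
    ((Derives.axiom_subst hAx σ).weaken (Multiset.zero_le Θ))

lemma Harrop.slash_of_derives
    (hboxT : refl = true → ProvesTBox Ax)
    (hcons : ¬ Derives (CKSys Ax) Θ (some .bot)) {H : Fml α} (hH : Harrop H)
    (hd : Derives (CKSys Ax) Θ (some H)) : Slash Ax Θ refl H := by
  induction hH with
  | atom => exact hd
  | top => trivial
  | bot => exact hcons hd
  | and _ _ ihA ihB => exact ⟨ihA hd.and_left, ihB hd.and_right⟩
  | box _ ih => exact ⟨hd, fun hrefl => ih ((hboxT hrefl).derives_of_box hd)⟩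
  | imp _ _ ih => exact ⟨hd, fun hsl => ih (hd.mp hsl.derives)⟩

lemma KBoxRule.seqSlash {ps : List (Seq α)} {c : Seq α} (hr : KBoxRule ps c)
    (hd : Derives (CKSys Ax) c.1 c.2) (ih : ∀ p ∈ ps, SeqSlash Ax Θ refl p.1 p.2) :
    SeqSlash Ax Θ refl c.1 c.2 := by
  obtain ⟨Γ, A⟩ := hr
  refine fun hΓ => ⟨hd.cut_of_forall_mem fun F hF => (hΓ F hF).derives, fun hrefl => ?_⟩
  exact ih _ (List.mem_singleton_self _) fun F hF => (hΓ _ (Multiset.mem_map_of_mem _ hF)).2 hrefl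

lemma KDiaRule.seqSlash {ps : List (Seq α)} {c : Seq α} (hr : KDiaRule ps c)
    (hd : Derives (CKSys Ax) c.1 c.2) (ih : ∀ p ∈ ps, SeqSlash Ax Θ refl p.1 p.2) :
    SeqSlash Ax Θ refl c.1 c.2 := by
  obtain ⟨Γ, A, B⟩ := hr
  intro hΓ
  obtain ⟨hrefl, -, hA⟩ := hΓ _ (Multiset.mem_cons_self _ _)
  refine ⟨hrefl, hd.cut_of_forall_mem fun F hF => (hΓ F hF).derives, ?_⟩
  refine ih _ (List.mem_singleton_self _) (Multiset.forall_mem_cons.2 ⟨hA, fun F hF => ?_⟩)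
  exact (hΓ _ (Multiset.mem_cons_of_mem (Multiset.mem_map_of_mem _ hF))).2 hrefl

theorem Derives.seqSlash (hAx : ∀ A, Ax A → Constructive A)
    (hsound : ∀ Γ E, Derives (CKSys Ax) Γ E → SeqValid (evalNode refl) Γ E)
    (hboxT : refl = true → ProvesTBox Ax) (hdiaT : refl = true → ProvesTDia Ax)
    {Γ : Multiset (Fml α)} {E : Option (Fml α)} (h : Derives (CKSys Ax) Γ E) :
    SeqSlash Ax Θ refl Γ E := by
  induction h with
  | step hr hp ih =>
    have hd := Derives.step hr hp
    rcases hr with hr | hr | hr | ⟨rfl, A, σ, hA, rfl⟩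
    · exact hr.seqSlash hd ih
    · exact hr.seqSlash hd ih
    · exact hr.seqSlash hd ih
    · exact fun _ => slash_axiom_subst hsound hboxT hdiaT hA (hAx A hA) σ

lemma forall_slash_add_imps (hboxT : refl = true → ProvesTBox Ax)
    {Γ : Multiset (Fml α)} {AB : List (Fml α × Fml α)}
    (hcons : ¬ Derives (CKSys Ax) (Γ + imps AB) (some .bot)) (hΓ : ∀ A ∈ Γ, Harrop A)
    (hAB : ∀ p ∈ AB, ¬ Derives (CKSys Ax) (Γ + imps AB) (some p.1)) :
    ∀ F ∈ Γ + imps AB, Slash Ax (Γ + imps AB) refl F := by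
  intro F hF
  rcases Multiset.mem_add.1 hF with hFΓ | hFAB
  · exact (hΓ F hFΓ).slash_of_derives hboxT hcons (.of_mem hF)
  · obtain ⟨p, hp, rfl⟩ := List.mem_map.1 hFAB
    exact ⟨.of_mem hF, fun hsl => (hAB p hp hsl.derives).elim⟩

lemma exists_node_of_tFree_or_tFull [Inhabited α] (h : TFree Ax ∨ TFull Ax) : ∃ refl : Bool,
    (∀ Γ E, Derives (CKSys Ax) Γ E → SeqValid (evalNode refl) Γ E) ∧
    (refl = true → ProvesTBox Ax) ∧ (refl = true → ProvesTDia Ax) := by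
  rcases h with hfree | hfull
  · exact ⟨false, evalNode_false ▸ hfree, nofun, nofun⟩
  · exact ⟨true, evalNode_true ▸ hfull.1, fun _ => hfull.provesTBox, fun _ => hfull.provesTDia⟩

end Slash

/-- Let `𝒞` be a finite set of constructive formulas and let
`G = CK+𝒞` be either T-free or T-full.  Then `G` has the Visser–Harrop
property. -/
theorem statement_0 (CS : Finset (Fml ℕ)) (hCS : ∀ A ∈ CS, Constructive A)
    (hTF : TFree (· ∈ CS) ∨ TFull (· ∈ CS))
    (Γ : Multiset (Fml ℕ)) (hΓ : ∀ A ∈ Γ, Harrop A)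
    (AB : List (Fml ℕ × Fml ℕ)) (C D : Fml ℕ)
    (h : Derives (CKSys (· ∈ CS)) (Γ + imps AB) (some (.or C D))) :
    Derives (CKSys (· ∈ CS)) (Γ + imps AB) (some C) ∨
    Derives (CKSys (· ∈ CS)) (Γ + imps AB) (some D) ∨
    ∃ p ∈ AB, Derives (CKSys (· ∈ CS)) (Γ + imps AB) (some p.1) := by
  by_contra! hcon
  obtain ⟨hC, hD, hAB⟩ := hcon
  obtain ⟨refl, hsound, hboxT, hdiaT⟩ := exists_node_of_tFree_or_tFull hTF
  have hslash : ∀ F ∈ Γ + imps AB, Slash (· ∈ CS) (Γ + imps AB) refl F :=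
    forall_slash_add_imps hboxT (fun hbot => hC hbot.of_bot) hΓ hAB
  rcases h.seqSlash hCS hsound hboxT hdiaT hslash with hsl | hsl
  · exact hC hsl.derives
  · exact hD hsl.derives
end UPT
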